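/- Let f ∈ C^1(ℝ^d) with f and ∇f integrable, V ∈ C^1 with bounded derivative, T_t(x) = x + tV(x), and Ω ⊂ ℝ^d a bounded measurable set. Define J(Ω) := ∫_Ω f dx. Then the shape derivative dJ(Ω; V) := lim_{t→0} (J(T_t(Ω)) − J(Ω))/t exists and equals ∫_Ω (∇f · V + f div V) dx. -/

import Mathlib

/-!
Pull the integral back to `Ω`: for small `t`, `T_t = id + t • V` is injective (a Lipschitz
perturbation of the identity) and `det (1 + t • DV x) > 0`, so the change of variables formula gives
`J(T_t Ω) = ∫_Ω f (x + t • V x) * det (1 + t • DV x) dx`. This integrand is `G (p x + t • v x)`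
with `G (y, B) = f y * det B` of class `C¹`, `p x = (x, 1)` and `v x = (V x, DV x)` bounded on `Ω`,
so it is Lipschitz in `t` uniformly in `x ∈ Ω` and one may differentiate under the integral sign.
The derivative of `det` at `1` is the trace.
-/

open MeasureTheory Metric
open scoped Topology NNReal

namespace ContinuousLinearMap

variable {𝕜 E : Type*} [NontriviallyNormedField 𝕜] [NormedAddCommGroup E] [NormedSpace 𝕜 E]

@[simp]
theorem det_one : (1 : E →L[𝕜] E).det = 1 := by
  rw [ContinuousLinearMap.det, one_def, coe_id, LinearMap.det_id]

variable [FiniteDimensional 𝕜 E]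

theorem contDiff_det [CompleteSpace 𝕜] {n : WithTop ℕ∞} :
    ContDiff 𝕜 n fun B : E →L[𝕜] E => B.det := by
  let b := Module.finBasis 𝕜 E
  have hdet (B : E →L[𝕜] E) : B.det =
      ∑ σ : Equiv.Perm (Fin (Module.finrank 𝕜 E)), (σ.sign : 𝕜) * ∏ i, b.coord (σ i) (B (b i)) := by
    simp [ContinuousLinearMap.det, ← LinearMap.det_toMatrix b, Matrix.det_apply',
      LinearMap.toMatrix_apply]
  simp_rw [hdet]
  refine ContDiff.sum fun σ _ => contDiff_const.mul (contDiff_prod fun i _ => ?_)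
  exact (LinearMap.toContinuousLinearMap (b.coord (σ i))).contDiff.comp
    (ContinuousLinearMap.apply 𝕜 E (b i)).contDiff

theorem hasDerivAt_det_one_add_smul (A : E →L[𝕜] E) :
    HasDerivAt (fun t : 𝕜 => (1 + t • A).det) (LinearMap.trace 𝕜 E A) 0 := by
  let b := Module.finBasis 𝕜 E
  set M := LinearMap.toMatrix b b A
  set Q := (1 + (Polynomial.X : Polynomial 𝕜) • M.map Polynomial.C).det.divX.divX
  have hdet (t : 𝕜) : (1 + t • A).det = 1 + M.trace * t + Q.eval t * t ^ 2 := by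
    rw [← Matrix.det_one_add_smul, ContinuousLinearMap.det, ← LinearMap.det_toMatrix b]
    simp [M]
  have hpoly : HasDerivAt (fun t : 𝕜 => 1 + M.trace * t + Q.eval t * t ^ 2) M.trace 0 := by
    simpa [Pi.add_def, Pi.mul_def] using
      (((hasDerivAt_id (0 : 𝕜)).const_mul M.trace).const_add 1).add
        ((Q.hasDerivAt 0).mul (hasDerivAt_pow 2 (0 : 𝕜)))
  rw [LinearMap.trace_eq_matrix_trace 𝕜 b]
  exact hpoly.congr_of_eventuallyEq (.of_forall hdet)

theorem fderiv_det_one_apply [CompleteSpace 𝕜] (A : E →L[𝕜] E) :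
    fderiv 𝕜 (fun B : E →L[𝕜] E => B.det) 1 A = LinearMap.trace 𝕜 E A := by
  have hline : HasDerivAt (fun t : 𝕜 => 1 + t • A) A 0 := by
    simpa using ((hasDerivAt_id (0 : 𝕜)).smul_const A).const_add 1
  have h := ((contDiff_det (n := 1)).differentiable one_ne_zero 1).hasFDerivAt
    |>.comp_hasDerivAt_of_eq 0 hline (by simp)
  exact h.unique (hasDerivAt_det_one_add_smul A)

end ContinuousLinearMap

theorem injective_add_smul_of_lipschitzWith {E : Type*} [NormedAddCommGroup E] [NormedSpace ℝ E]
    {V : E → E} {K : ℝ≥0} (hV : LipschitzWith K V) {t : ℝ} (ht : ‖t‖₊ * K < 1) :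
    Function.Injective fun x => x + t • V x :=
  (AntilipschitzWith.id.add_lipschitzWith ((lipschitzWith_smul t).comp hV)
    (by simpa using ht)).injective

theorem eventually_forall_det_one_add_smul_pos {E : Type*} [NormedAddCommGroup E]
    [NormedSpace ℝ E] (C : ℝ) :
    ∀ᶠ t in 𝓝 (0 : ℝ), ∀ A : E →L[ℝ] E, ‖A‖ ≤ C → 0 < (1 + t • A).det := by
  have hdet : ∀ᶠ B in 𝓝 (1 : E →L[ℝ] E), 0 < B.det :=
    continuousAt_const.eventually_lt ContinuousLinearMap.continuous_det.continuousAt (by simp)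
  obtain ⟨ε, hε, hB⟩ := Metric.eventually_nhds_iff.1 hdet
  filter_upwards [ball_mem_nhds (0 : ℝ) (by positivity : 0 < ε / (|C| + 1))] with t ht A hA
  apply hB
  rw [dist_eq_norm, add_sub_cancel_left, norm_smul]
  rw [mem_ball_zero_iff, lt_div_iff₀ (by positivity)] at ht
  calc ‖t‖ * ‖A‖ ≤ ‖t‖ * (|C| + 1) := by gcongr; linarith [le_abs_self C]
    _ < ε := ht

theorem integral_image_add_smul_eventuallyEq {E : Type*} [NormedAddCommGroup E] [NormedSpace ℝ E]
    [FiniteDimensional ℝ E] [MeasurableSpace E] [BorelSpace E] (μ : Measure E) [μ.IsAddHaarMeasure]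
    (f : E → ℝ) {V : E → E} (hV : Differentiable ℝ V) {C : ℝ} (hC : ∀ x, ‖fderiv ℝ V x‖ ≤ C)
    {Ω : Set E} (hΩ : MeasurableSet Ω) :
    (fun t : ℝ => ∫ x in (fun x => x + t • V x) '' Ω, f x ∂μ) =ᶠ[𝓝 0]
      fun t => ∫ x in Ω, f (x + t • V x) * (1 + t • fderiv ℝ V x).det ∂μ := by
  have hlip : LipschitzWith C.toNNReal V :=
    lipschitzWith_of_nnnorm_fderiv_le hV fun x => by
      simpa [← NNReal.coe_le_coe] using (hC x).trans (le_max_left C 0)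
  have hsmall : ∀ᶠ t in 𝓝 (0 : ℝ), ‖t‖₊ * C.toNNReal < 1 := by
    have : Continuous fun t : ℝ => ‖t‖₊ * C.toNNReal := by fun_prop
    exact this.continuousAt.eventually_lt continuousAt_const (by simp)
  filter_upwards [hsmall, eventually_forall_det_one_add_smul_pos (E := E) C] with t ht hpos
  have hderiv (x : E) : HasFDerivAt (fun x => x + t • V x) (1 + t • fderiv ℝ V x) x :=
    (hasFDerivAt_id x).add ((hV x).hasFDerivAt.const_smul t)
  rw [integral_image_eq_integral_abs_det_fderiv_smul μ hΩ (fun x _ => (hderiv x).hasFDerivWithinAt)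
    (injective_add_smul_of_lipschitzWith hlip ht).injOn]
  refine setIntegral_congr_fun hΩ fun x _ => ?_
  rw [abs_of_pos (hpos _ (hC x)), smul_eq_mul, mul_comm]

section ParametricIntegral

variable {E F : Type*} [NormedAddCommGroup E] [NormedSpace ℝ E] [FiniteDimensional ℝ E]
  [NormedAddCommGroup F] [NormedSpace ℝ F]

theorem ContDiff.exists_lipschitzOnWith_comp_add_smul {g : E → F} (hg : ContDiff ℝ 1 g)
    (R r : ℝ) : ∃ K, ∀ p v : E, ‖p‖ ≤ R → ‖v‖ ≤ R →
      LipschitzOnWith K (fun t : ℝ => g (p + t • v)) (ball 0 r) := by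
  obtain ⟨K, hK⟩ := hg.locallyLipschitz.locallyLipschitzOn.exists_lipschitzOnWith_of_compact
    (isCompact_closedBall (0 : E) (R + r * R))
  refine ⟨K * R.toNNReal, fun p v hp hv => ?_⟩
  have hline : LipschitzWith R.toNNReal fun t : ℝ => p + t • v := by
    refine LipschitzWith.of_dist_le_mul fun t s => ?_
    rw [dist_add_left, dist_eq_norm, ← sub_smul, norm_smul, ← dist_eq_norm, mul_comm]
    gcongr
    exact hv.trans (le_max_left R 0)
  refine hK.comp hline.lipschitzOnWith fun t ht => ?_
  rw [mem_ball_zero_iff] at ht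
  rw [mem_closedBall_zero_iff]
  calc ‖p + t • v‖ ≤ ‖p‖ + ‖t‖ * ‖v‖ := (norm_add_le _ _).trans_eq (by rw [norm_smul])
    _ ≤ R + r * R := by gcongr; linarith [norm_nonneg t]

theorem hasDerivAt_integral_comp_add_smul [CompleteSpace F] {α : Type*} [MeasurableSpace α]
    {μ : Measure α} [IsFiniteMeasure μ] {g : E → F} (hg : ContDiff ℝ 1 g) {p v : α → E}
    (hp : AEStronglyMeasurable p μ) (hv : AEStronglyMeasurable v μ) {R : ℝ}
    (hpR : ∀ᵐ a ∂μ, ‖p a‖ ≤ R) (hvR : ∀ᵐ a ∂μ, ‖v a‖ ≤ R) :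
    HasDerivAt (fun t : ℝ => ∫ a, g (p a + t • v a) ∂μ) (∫ a, fderiv ℝ g (p a) (v a) ∂μ) 0 := by
  obtain ⟨K, hK⟩ := hg.exists_lipschitzOnWith_comp_add_smul R 1
  have hmeas (t : ℝ) : AEStronglyMeasurable (fun a => g (p a + t • v a)) μ :=
    hg.continuous.comp_aestronglyMeasurable (hp.add (hv.const_smul t))
  have hint : Integrable (fun a => g (p a + (0 : ℝ) • v a)) μ := by
    obtain ⟨B, hB⟩ := (isCompact_closedBall (0 : E) R).exists_bound_of_continuousOn
      hg.continuous.continuousOn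
    refine .of_bound (hmeas 0) B (hpR.mono fun a ha => ?_)
    simpa using hB _ (mem_closedBall_zero_iff.2 ha)
  have hderiv_meas : AEStronglyMeasurable (fun a => fderiv ℝ g (p a) (v a)) μ :=
    (ContinuousLinearMap.apply ℝ F).aestronglyMeasurable_comp₂ hv
      ((hg.continuous_fderiv one_ne_zero).comp_aestronglyMeasurable hp)
  have hlip : ∀ᵐ a ∂μ,
      LipschitzOnWith (Real.nnabs K) (fun t : ℝ => g (p a + t • v a)) (ball 0 1) := by
    filter_upwards [hpR, hvR] with a hpa hva
    simpa using hK _ _ hpa hva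
  have hderiv (a : α) :
      HasDerivAt (fun t : ℝ => g (p a + t • v a)) (fderiv ℝ g (p a) (v a)) 0 := by
    have hline : HasDerivAt (fun t : ℝ => p a + t • v a) (v a) 0 := by
      simpa using ((hasDerivAt_id (0 : ℝ)).smul_const (v a)).const_add (p a)
    exact ((hg.differentiable one_ne_zero _).hasFDerivAt.comp_hasDerivAt_of_eq 0 hline (by simp))
  exact (hasDerivAt_integral_of_dominated_loc_of_lip (ball_mem_nhds 0 one_pos) (.of_forall hmeas)
    hint hderiv_meas hlip (integrable_const (K : ℝ)) (.of_forall hderiv)).2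

theorem fderiv_mul_det_apply {f : E → ℝ} {x : E} (hf : DifferentiableAt ℝ f x) (v : E)
    (A : E →L[ℝ] E) :
    fderiv ℝ (fun y : E × (E →L[ℝ] E) => f y.1 * y.2.det) (x, 1) (v, A) =
      fderiv ℝ f x v + f x * LinearMap.trace ℝ E A := by
  have hf' : HasFDerivAt (fun y : E × (E →L[ℝ] E) => f y.1)
      ((fderiv ℝ f x).comp (ContinuousLinearMap.fst ℝ E (E →L[ℝ] E))) (x, 1) :=
    hf.hasFDerivAt.comp (x, 1) hasFDerivAt_fst
  have hdet : HasFDerivAt (fun y : E × (E →L[ℝ] E) => y.2.det)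
      ((fderiv ℝ (fun B : E →L[ℝ] E => B.det) 1).comp (ContinuousLinearMap.snd ℝ E (E →L[ℝ] E)))
      ((x, 1) : E × (E →L[ℝ] E)) :=
    HasFDerivAt.comp (g := fun B : E →L[ℝ] E => B.det) _
      ((ContinuousLinearMap.contDiff_det.differentiable one_ne_zero) 1).hasFDerivAt hasFDerivAt_snd
  rw [(hf'.fun_mul hdet).fderiv]
  simp [ContinuousLinearMap.fderiv_det_one_apply]
  ring

end ParametricIntegral

theorem hasDerivAt_integral_image_add_smul {E : Type*} [NormedAddCommGroup E] [NormedSpace ℝ E]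
    [FiniteDimensional ℝ E] [MeasurableSpace E] [BorelSpace E] (μ : Measure E) [μ.IsAddHaarMeasure]
    {f : E → ℝ} (hf : ContDiff ℝ 1 f) {V : E → E} (hV : ContDiff ℝ 1 V) {C : ℝ}
    (hC : ∀ x, ‖fderiv ℝ V x‖ ≤ C) {Ω : Set E} (hΩm : MeasurableSet Ω)
    (hΩb : Bornology.IsBounded Ω) :
    HasDerivAt (fun t : ℝ => ∫ x in (fun x => x + t • V x) '' Ω, f x ∂μ)
      (∫ x in Ω, (fderiv ℝ f x (V x) + f x * LinearMap.trace ℝ E (fderiv ℝ V x)) ∂μ) 0 := by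
  obtain ⟨R, hR⟩ := hΩb.exists_norm_le
  obtain ⟨M, hM⟩ := (isCompact_closedBall (0 : E) R).exists_bound_of_continuousOn
    hV.continuous.continuousOn
  have : IsFiniteMeasure (μ.restrict Ω) := isFiniteMeasure_restrict.2 hΩb.measure_lt_top.ne
  have hG : ContDiff ℝ 1 fun y : E × (E →L[ℝ] E) => f y.1 * y.2.det :=
    (hf.comp contDiff_fst).mul (ContinuousLinearMap.contDiff_det.comp contDiff_snd)
  have hpR : ∀ᵐ x ∂μ.restrict Ω, ‖((x, 1) : E × (E →L[ℝ] E))‖ ≤ max (max R 1) (max M C) :=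
    ae_restrict_of_forall_mem hΩm fun x hx => norm_prod_le_iff.2
      ⟨le_max_of_le_left (le_max_of_le_left (hR x hx)),
        le_max_of_le_left (le_max_of_le_right ContinuousLinearMap.norm_id_le)⟩
  have hvR : ∀ᵐ x ∂μ.restrict Ω, ‖(V x, fderiv ℝ V x)‖ ≤ max (max R 1) (max M C) :=
    ae_restrict_of_forall_mem hΩm fun x hx => norm_prod_le_iff.2
      ⟨le_max_of_le_right (le_max_of_le_left (hM x (mem_closedBall_zero_iff.2 (hR x hx)))),
        le_max_of_le_right (le_max_of_le_right (hC x))⟩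
  have hderiv := hasDerivAt_integral_comp_add_smul hG
    (continuous_id.prodMk continuous_const).aestronglyMeasurable
    (hV.continuous.prodMk (hV.continuous_fderiv one_ne_zero)).aestronglyMeasurable hpR hvR
  simp only [Prod.smul_mk, Prod.mk_add_mk] at hderiv
  refine (hderiv.congr_of_eventuallyEq (integral_image_add_smul_eventuallyEq μ f
    (hV.differentiable one_ne_zero) hC hΩm)).congr_deriv
    (integral_congr_ae (.of_forall fun x => ?_))
  exact fderiv_mul_det_apply (hf.differentiable one_ne_zero x) _ _

theorem stmt_5_general {d : ℕ}
    (f : EuclideanSpace ℝ (Fin d) → ℝ) (hf : ContDiff ℝ 1 f)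
    (V : EuclideanSpace ℝ (Fin d) → EuclideanSpace ℝ (Fin d)) (hV : ContDiff ℝ 1 V)
    (hVb : ∃ C, ∀ x, ‖fderiv ℝ V x‖ ≤ C)
    (Ω : Set (EuclideanSpace ℝ (Fin d))) (hΩm : MeasurableSet Ω) (hΩb : Bornology.IsBounded Ω) :
    HasDerivAt (fun t : ℝ => ∫ x in (fun x => x + t • V x) '' Ω, f x)
      (∫ x in Ω, (inner ℝ (gradient f x) (V x)
        + f x * LinearMap.trace ℝ _ (fderiv ℝ V x : EuclideanSpace ℝ (Fin d) →ₗ[ℝ] EuclideanSpace ℝ (Fin d)))) 0 := by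
  obtain ⟨C, hC⟩ := hVb
  refine (hasDerivAt_integral_image_add_smul volume hf hV hC hΩm hΩb).congr_deriv ?_
  simp [gradient]

/-- Shape derivative of the volume functional `J(Ω) = ∫_Ω f dx` under the perturbation of
identity `T_t = id + tV`:  `dJ(Ω; V) = ∫_Ω (∇f · V + f div V) dx`. -/
theorem stmt_5 {d : ℕ}
    (f : EuclideanSpace ℝ (Fin d) → ℝ) (hf : ContDiff ℝ 1 f)
    (hfi : Integrable f) (hgi : Integrable (fun x => gradient f x))
    (V : EuclideanSpace ℝ (Fin d) → EuclideanSpace ℝ (Fin d)) (hV : ContDiff ℝ 1 V)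
    (hVb : ∃ C, ∀ x, ‖fderiv ℝ V x‖ ≤ C)
    (Ω : Set (EuclideanSpace ℝ (Fin d))) (hΩm : MeasurableSet Ω) (hΩb : Bornology.IsBounded Ω) :
    HasDerivAt (fun t : ℝ => ∫ x in (fun x => x + t • V x) '' Ω, f x)
      (∫ x in Ω, (inner ℝ (gradient f x) (V x)
        + f x * LinearMap.trace ℝ _ (fderiv ℝ V x : EuclideanSpace ℝ (Fin d) →ₗ[ℝ] EuclideanSpace ℝ (Fin d)))) 0 :=
  stmt_5_general f hf V hV hVb Ω hΩm hΩb
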